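/- Fix λ > 0 and p a probability distribution on ℝ^d with bounded support. Define the iteration: U⁽⁰⁾ = I, F⁽ᵏ⁾ = E_{x∼p}[(U⁽ᵏ⁾ x xᵀ U⁽ᵏ⁾)/‖U⁽ᵏ⁾ x‖ · 1{x≠0}] + λ U⁽ᵏ⁾, and U⁽ᵏ⁺¹⁾ = sym((F⁽ᵏ⁾)^{-1/2} U⁽ᵏ⁾), where sym(A) = (Aᵀ A)^{1/2}. Then for every k, λ_min(F⁽ᵏ⁾)^{1/2} ≤ λ_min(F⁽ᵏ⁺¹⁾) ≤ λ_max(F⁽ᵏ⁺¹⁾) ≤ λ_max(F⁽ᵏ⁾)^{1/2}. -/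

import Mathlib

open MeasureTheory Matrix
open scoped Classical

/-- Euclidean norm on `Fin d → ℝ`. -/
noncomputable def enorm' {d : ℕ} (v : Fin d → ℝ) : ℝ := Real.sqrt (∑ i, (v i)^2)

/-- Euclidean inner product on `Fin d → ℝ`. -/
noncomputable def einner' {d : ℕ} (v w : Fin d → ℝ) : ℝ := ∑ i, v i * w i

/-- Operator (spectral) norm of a real matrix. -/
noncomputable def opNorm {d : ℕ} (M : Matrix (Fin d) (Fin d) ℝ) : ℝ :=
  ‖(Matrix.toEuclideanCLM (𝕜 := ℝ) M :
      EuclideanSpace ℝ (Fin d) →L[ℝ] EuclideanSpace ℝ (Fin d))‖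

/-- Positive semidefinite square root (junk value `0` on non-PSD matrices). -/
noncomputable def psqrt {d : ℕ} (A : Matrix (Fin d) (Fin d) ℝ) : Matrix (Fin d) (Fin d) ℝ :=
  if h : A.PosSemidef then
    h.1.eigenvectorUnitary.1 * diagonal ((↑) ∘ Real.sqrt ∘ h.1.eigenvalues) *
      (star h.1.eigenvectorUnitary : Matrix (Fin d) (Fin d) ℝ)
  else 0

/-- Entrywise expectation of a matrix-valued function. -/
noncomputable def mExp {d : ℕ} (p : Measure (Fin d → ℝ))
    (f : (Fin d → ℝ) → Matrix (Fin d) (Fin d) ℝ) : Matrix (Fin d) (Fin d) ℝ :=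
  Matrix.of fun i j => ∫ x, f x i j ∂p

/-- The LDP operator `F(U) = E[(U x xᵀ U)/‖U x‖ · 1{x ≠ 0}] + λ U`. -/
noncomputable def FLDP {d : ℕ} (p : Measure (Fin d → ℝ)) (lam : ℝ)
    (U : Matrix (Fin d) (Fin d) ℝ) : Matrix (Fin d) (Fin d) ℝ :=
  mExp p (fun x => if x = 0 then 0
    else (enorm' (U.mulVec x))⁻¹ • vecMulVec (U.mulVec x) (U.mulVec x)) + lam • U

/-- The DP operator `G(W) = E[(W x xᵀ W)/(1 + γ‖W x‖)] + λ W`. -/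
noncomputable def FJDP {d : ℕ} (p : Measure (Fin d → ℝ)) (γ lam : ℝ)
    (W : Matrix (Fin d) (Fin d) ℝ) : Matrix (Fin d) (Fin d) ℝ :=
  mExp p (fun x => (1 + γ * enorm' (W.mulVec x))⁻¹ • vecMulVec (W.mulVec x) (W.mulVec x))
    + lam • W

/-- `sym(A) = (Aᵀ A)^{1/2}`. -/
noncomputable def symMat {d : ℕ} (A : Matrix (Fin d) (Fin d) ℝ) : Matrix (Fin d) (Fin d) ℝ :=
  psqrt (Aᵀ * A)

/-- Smallest eigenvalue of a Hermitian matrix (junk value `0` otherwise). -/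
noncomputable def lmin {d : ℕ} (A : Matrix (Fin d) (Fin d) ℝ) : ℝ :=
  if h : A.IsHermitian then ⨅ i, h.eigenvalues i else 0

/-- Largest eigenvalue of a Hermitian matrix (junk value `0` otherwise). -/
noncomputable def lmax {d : ℕ} (A : Matrix (Fin d) (Fin d) ℝ) : ℝ :=
  if h : A.IsHermitian then ⨆ i, h.eigenvalues i else 0

/-!
Write `F = F⁽ᵏ⁾`, `U = U⁽ᵏ⁾`, `T = F^{-1/2}` and `A = T U`, so that `U⁽ᵏ⁺¹⁾ = (Aᵀ A)^{1/2}`.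
The polar decomposition `A = Q U⁽ᵏ⁺¹⁾` with `Q` orthogonal shows that `F⁽ᵏ⁺¹⁾` is orthogonally
similar to `G = E[g(A x)] + λ (A Aᵀ)^{1/2}`, where `g(w) = w wᵀ / ‖w‖`. On the other hand
`T F T = 1` reads `T E[g(U x)] T + λ P = 1` with `P = T U T`. Now `g(T w) = (‖w‖ / ‖T w‖) T g(w) T`
with `‖w‖ / ‖T w‖ ∈ [√λ_min(F), √λ_max(F)]`, and `A Aᵀ = P F P` lies between `λ_min(F) P²` and
`λ_max(F) P²`, so by operator monotonicity of the square root `(A Aᵀ)^{1/2}` lies between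
`√λ_min(F) P` and `√λ_max(F) P`. Adding up, `√λ_min(F) ≤ G ≤ √λ_max(F)` in the Loewner order.
-/

open scoped MatrixOrder

section ExtremeEigenvalues

lemma smul_one_le_iff_le_eigenvalues {n : Type*} [Fintype n] [DecidableEq n] {A : Matrix n n ℝ}
    (hA : A.IsHermitian) (c : ℝ) : c • 1 ≤ A ↔ ∀ i, c ≤ hA.eigenvalues i := by
  rw [← Algebra.algebraMap_eq_smul_one, algebraMap_le_iff_le_spectrum hA.isSelfAdjoint,
    hA.spectrum_real_eq_range_eigenvalues, Set.forall_mem_range]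

lemma le_smul_one_iff_eigenvalues_le {n : Type*} [Fintype n] [DecidableEq n] {A : Matrix n n ℝ}
    (hA : A.IsHermitian) (c : ℝ) : A ≤ c • 1 ↔ ∀ i, hA.eigenvalues i ≤ c := by
  rw [← Algebra.algebraMap_eq_smul_one, le_algebraMap_iff_spectrum_le hA.isSelfAdjoint,
    hA.spectrum_real_eq_range_eigenvalues, Set.forall_mem_range]

variable {d : ℕ} {A : Matrix (Fin d) (Fin d) ℝ}

lemma le_lmin_iff (hd : 0 < d) (hA : A.IsHermitian) {c : ℝ} : c ≤ lmin A ↔ c • 1 ≤ A := by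
  have : Nonempty (Fin d) := Fin.pos_iff_nonempty.mp hd
  rw [lmin, dif_pos hA, le_ciInf_iff (Set.finite_range _).bddBelow,
    smul_one_le_iff_le_eigenvalues hA]

lemma lmax_le_iff (hd : 0 < d) (hA : A.IsHermitian) {c : ℝ} : lmax A ≤ c ↔ A ≤ c • 1 := by
  have : Nonempty (Fin d) := Fin.pos_iff_nonempty.mp hd
  rw [lmax, dif_pos hA, ciSup_le_iff (Set.finite_range _).bddAbove,
    le_smul_one_iff_eigenvalues_le hA]

lemma lmin_le_lmax (hd : 0 < d) (hA : A.IsHermitian) : lmin A ≤ lmax A := by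
  have : Nonempty (Fin d) := Fin.pos_iff_nonempty.mp hd
  rw [lmin, lmax, dif_pos hA, dif_pos hA]
  exact ciInf_le_ciSup (Set.finite_range _).bddBelow (Set.finite_range _).bddAbove

end ExtremeEigenvalues

namespace Matrix

lemma transpose_eq_self_of_nonneg {n : Type*} {A : Matrix n n ℝ} (hA : 0 ≤ A) : Aᵀ = A := by
  simpa using (nonneg_iff_posSemidef.mp hA).isHermitian.eq

variable {n : Type*} [Fintype n] {A B P F : Matrix n n ℝ}

lemma conj_le_conj_of_nonneg (hP : 0 ≤ P) (h : A ≤ B) : P * A * P ≤ P * B * P := by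
  simpa [(IsSelfAdjoint.of_nonneg hP).star_eq] using star_left_conjugate_le_conjugate h P

lemma dotProduct_mulVec_le_of_le (h : A ≤ B) (v : n → ℝ) : v ⬝ᵥ A *ᵥ v ≤ v ⬝ᵥ B *ᵥ v := by
  simpa [sub_mulVec] using (le_iff.mp h).dotProduct_mulVec_nonneg v

variable [DecidableEq n]

lemma sqrt_eq_of_mul_self (hB : 0 ≤ B) (h : B * B = A) : CFC.sqrt A = B := by
  have hA : 0 ≤ A := by
    simpa [h, (IsSelfAdjoint.of_nonneg hB).star_eq] using star_mul_self_nonneg B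
  exact (CFC.sqrt_eq_iff A B).mpr h

lemma sqrt_smul_mul_self (hB : 0 ≤ B) {c : ℝ} (hc : 0 ≤ c) :
    CFC.sqrt (c • (B * B)) = Real.sqrt c • B := by
  refine sqrt_eq_of_mul_self (smul_nonneg (Real.sqrt_nonneg c) hB) ?_
  rw [smul_mul_smul_comm, Real.mul_self_sqrt hc]

lemma PosDef.sqrt (hA : A.PosDef) : (CFC.sqrt A).PosDef := by
  rw [← isStrictlyPositive_iff_posDef] at hA ⊢
  exact hA.sqrt

lemma PosDef.inv_sqrt_mul_mul_inv_sqrt (hA : A.PosDef) :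
    (CFC.sqrt A)⁻¹ * A * (CFC.sqrt A)⁻¹ = 1 := by
  set S := CFC.sqrt A
  have hdet : IsUnit S.det := (isUnit_iff_isUnit_det _).mp hA.sqrt.isUnit
  have hSS : S * S = A := CFC.sqrt_mul_sqrt_self A hA.posSemidef.nonneg
  rw [← hSS, Matrix.mul_assoc, Matrix.mul_assoc, mul_nonsing_inv _ hdet, Matrix.mul_one,
    nonsing_inv_mul _ hdet]

lemma sqrt_le_sqrt (hA : 0 ≤ A) (hAB : A ≤ B) : CFC.sqrt A ≤ CFC.sqrt B := by
  have hB : 0 ≤ B := hA.trans hAB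
  set S := CFC.sqrt A
  set T := CFC.sqrt B
  have hS : S.PosSemidef := nonneg_iff_posSemidef.mp (CFC.sqrt_nonneg A)
  have hT : T.PosSemidef := nonneg_iff_posSemidef.mp (CFC.sqrt_nonneg B)
  have hD : (T - S).IsHermitian := hT.1.sub hS.1
  rw [← sub_nonneg, nonneg_iff_posSemidef, hD.posSemidef_iff_eigenvalues_nonneg]
  intro i
  rw [Pi.zero_apply]
  -- An eigenvector `v` of `T - S` for an eigenvalue `μ < 0` would give
  -- `0 ≤ vᵀ (B - A) v = vᵀ (T (T - S) + (T - S) S) v = μ (vᵀ T v + vᵀ S v) ≤ 0`,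
  -- forcing `T v = S v = 0` and hence `μ v = 0`.
  by_contra! hμ
  set μ := hD.eigenvalues i
  set v : n → ℝ := ⇑(hD.eigenvectorBasis i)
  have hv : (T - S) *ᵥ v = μ • v := hD.mulVec_eigenvectorBasis i
  have hv0 : v ≠ 0 := fun h =>
    hD.eigenvectorBasis.orthonormal.ne_zero i (by ext j; exact congrFun h j)
  have hquad : v ⬝ᵥ (B - A) *ᵥ v = μ * (v ⬝ᵥ T *ᵥ v + v ⬝ᵥ S *ᵥ v) := by
    have hfact : B - A = T * (T - S) + (T - S) * S := by
      rw [mul_sub, sub_mul, CFC.sqrt_mul_sqrt_self A, CFC.sqrt_mul_sqrt_self B]; abel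
    have hsymm : v ᵥ* (T - S) = μ • v := by
      rw [← mulVec_transpose, ← conjTranspose_eq_transpose_of_trivial, hD.eq, hv]
    rw [hfact, add_mulVec, dotProduct_add, ← mulVec_mulVec, ← mulVec_mulVec, hv,
      dotProduct_mulVec v (T - S), hsymm]
    simp only [mulVec_smul, dotProduct_smul, smul_dotProduct, smul_eq_mul]
    ring
  have hTv := hT.dotProduct_mulVec_nonneg v
  have hSv := hS.dotProduct_mulVec_nonneg v
  have hBA := (le_iff.mp hAB).dotProduct_mulVec_nonneg v
  simp only [star_trivial] at hTv hSv hBA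
  rw [hquad] at hBA
  have hTv0 : T *ᵥ v = 0 :=
    (hT.dotProduct_mulVec_zero_iff v).mp (by rw [star_trivial]; nlinarith)
  have hSv0 : S *ᵥ v = 0 :=
    (hS.dotProduct_mulVec_zero_iff v).mp (by rw [star_trivial]; nlinarith)
  have : μ • v = 0 := by rw [← hv, sub_mulVec, hTv0, hSv0, sub_zero]
  exact hv0 ((smul_eq_zero.mp this).resolve_left hμ.ne)

lemma sqrt_smul_le_sqrt_conj (hP : 0 ≤ P) {m : ℝ} (hm : 0 ≤ m) (h : m • 1 ≤ F) :
    Real.sqrt m • P ≤ CFC.sqrt (P * F * P) := by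
  have hPP : 0 ≤ P * P := by simpa using conj_le_conj_of_nonneg hP (zero_le_one' (Matrix n n ℝ))
  rw [← sqrt_smul_mul_self hP hm]
  exact sqrt_le_sqrt (smul_nonneg hm hPP) (by simpa using conj_le_conj_of_nonneg hP h)

lemma sqrt_conj_le_sqrt_smul (hP : 0 ≤ P) (hF : 0 ≤ F) {M : ℝ} (hM : 0 ≤ M) (h : F ≤ M • 1) :
    CFC.sqrt (P * F * P) ≤ Real.sqrt M • P := by
  rw [← sqrt_smul_mul_self hP hM]
  exact sqrt_le_sqrt (by simpa using conj_le_conj_of_nonneg hP hF)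
    (by simpa using conj_le_conj_of_nonneg hP h)

end Matrix

section EuclideanNorm

variable {d : ℕ}

lemma enorm'_eq_norm (v : Fin d → ℝ) : enorm' v = ‖WithLp.toLp 2 v‖ := by
  simp [enorm', EuclideanSpace.norm_eq]

lemma enorm'_nonneg (v : Fin d → ℝ) : 0 ≤ enorm' v := Real.sqrt_nonneg _

lemma enorm'_eq_zero {v : Fin d → ℝ} : enorm' v = 0 ↔ v = 0 := by
  rw [enorm'_eq_norm, norm_eq_zero, WithLp.toLp_eq_zero]

lemma enorm'_sq (v : Fin d → ℝ) : enorm' v ^ 2 = v ⬝ᵥ v := by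
  rw [enorm', Real.sq_sqrt (Finset.sum_nonneg fun i _ => sq_nonneg _)]
  simp [dotProduct, sq]

lemma enorm'_mulVec_sq (B : Matrix (Fin d) (Fin d) ℝ) (v : Fin d → ℝ) :
    enorm' (B *ᵥ v) ^ 2 = v ⬝ᵥ (Bᵀ * B) *ᵥ v := by
  rw [enorm'_sq, ← mulVec_mulVec, dotProduct_mulVec v Bᵀ, vecMul_transpose]

lemma dotProduct_smul_one_mulVec (c : ℝ) (v : Fin d → ℝ) :
    v ⬝ᵥ (c • (1 : Matrix (Fin d) (Fin d) ℝ)) *ᵥ v = c * enorm' v ^ 2 := by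
  rw [smul_mulVec, one_mulVec, dotProduct_smul, enorm'_sq, smul_eq_mul]

lemma enorm'_mulVec_le (B : Matrix (Fin d) (Fin d) ℝ) (v : Fin d → ℝ) :
    enorm' (B *ᵥ v) ≤ opNorm B * enorm' v := by
  rw [enorm'_eq_norm, enorm'_eq_norm, opNorm, ← toEuclideanCLM_toLp]
  exact ContinuousLinearMap.le_opNorm _ _

lemma sqrt_mul_enorm'_le {B : Matrix (Fin d) (Fin d) ℝ} {c : ℝ} (h : c • 1 ≤ Bᵀ * B)
    (v : Fin d → ℝ) : Real.sqrt c * enorm' v ≤ enorm' (B *ᵥ v) := by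
  have hq := dotProduct_mulVec_le_of_le h v
  rw [dotProduct_smul_one_mulVec, ← enorm'_mulVec_sq] at hq
  simpa only [Real.sqrt_mul' c (sq_nonneg _), Real.sqrt_sq (enorm'_nonneg _)] using
    Real.sqrt_le_sqrt hq

lemma enorm'_mulVec_le_sqrt_mul {B : Matrix (Fin d) (Fin d) ℝ} {c : ℝ} (h : Bᵀ * B ≤ c • 1)
    (v : Fin d → ℝ) : enorm' (B *ᵥ v) ≤ Real.sqrt c * enorm' v := by
  have hq := dotProduct_mulVec_le_of_le h v
  rw [dotProduct_smul_one_mulVec, ← enorm'_mulVec_sq] at hq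
  simpa only [Real.sqrt_mul' c (sq_nonneg _), Real.sqrt_sq (enorm'_nonneg _)] using
    Real.sqrt_le_sqrt hq

lemma enorm'_mulVec_of_orthogonal {Q : Matrix (Fin d) (Fin d) ℝ} (hQ : Qᵀ * Q = 1)
    (v : Fin d → ℝ) : enorm' (Q *ᵥ v) = enorm' v := by
  rw [← Real.sqrt_sq (enorm'_nonneg (Q *ᵥ v)), enorm'_mulVec_sq, hQ, one_mulVec, ← enorm'_sq,
    Real.sqrt_sq (enorm'_nonneg v)]

end EuclideanNorm

section Expectation

variable {d : ℕ} {p : Measure (Fin d → ℝ)} {f g : (Fin d → ℝ) → Matrix (Fin d) (Fin d) ℝ}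

lemma integrable_mul_mul_transpose_apply (hf : ∀ i j, Integrable (fun x => f x i j) p)
    (B : Matrix (Fin d) (Fin d) ℝ) (i j : Fin d) :
    Integrable (fun x => (B * f x * Bᵀ) i j) p := by
  simp only [mul_apply, transpose_apply, Finset.sum_mul]
  exact integrable_finsetSum _ fun k _ => integrable_finsetSum _ fun l _ =>
    ((hf l k).const_mul _).mul_const _

lemma mExp_smul (c : ℝ) : mExp p (fun x => c • f x) = c • mExp p f := by
  ext i j
  exact integral_const_mul c _

lemma mExp_sub (hf : ∀ i j, Integrable (fun x => f x i j) p)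
    (hg : ∀ i j, Integrable (fun x => g x i j) p) :
    mExp p (fun x => g x - f x) = mExp p g - mExp p f := by
  ext i j
  exact integral_sub (hg i j) (hf i j)

lemma mExp_mul_mul_transpose (hf : ∀ i j, Integrable (fun x => f x i j) p)
    (B : Matrix (Fin d) (Fin d) ℝ) : mExp p (fun x => B * f x * Bᵀ) = B * mExp p f * Bᵀ := by
  ext i j
  simp only [mExp, of_apply, mul_apply, transpose_apply, Finset.sum_mul]
  rw [integral_finsetSum _ fun k _ => integrable_finsetSum _ fun l _ =>
    ((hf l k).const_mul _).mul_const _]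
  refine Finset.sum_congr rfl fun k _ => ?_
  rw [integral_finsetSum _ fun l _ => ((hf l k).const_mul _).mul_const _]
  refine Finset.sum_congr rfl fun l _ => ?_
  rw [integral_mul_const, integral_const_mul]

lemma dotProduct_mExp_mulVec (hf : ∀ i j, Integrable (fun x => f x i j) p) (v : Fin d → ℝ) :
    v ⬝ᵥ mExp p f *ᵥ v = ∫ x, v ⬝ᵥ f x *ᵥ v ∂p := by
  simp only [dotProduct, mulVec, mExp, of_apply, Finset.mul_sum]
  rw [integral_finsetSum _ fun i _ => integrable_finsetSum _ fun j _ =>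
    ((hf i j).mul_const _).const_mul _]
  refine Finset.sum_congr rfl fun i _ => ?_
  rw [integral_finsetSum _ fun j _ => ((hf i j).mul_const _).const_mul _]
  refine Finset.sum_congr rfl fun j _ => ?_
  rw [integral_const_mul, integral_mul_const]

lemma mExp_nonneg (hf : ∀ i j, Integrable (fun x => f x i j) p) (h : ∀ x, 0 ≤ f x) :
    0 ≤ mExp p f := by
  have hherm : (mExp p f).IsHermitian := by
    ext i j
    exact integral_congr_ae (.of_forall fun x => (nonneg_iff_posSemidef.mp (h x)).1.apply i j)
  refine nonneg_iff_posSemidef.mpr (.of_dotProduct_mulVec_nonneg hherm fun v => ?_)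
  rw [star_trivial, dotProduct_mExp_mulVec hf]
  exact integral_nonneg fun x => by simpa using dotProduct_mulVec_le_of_le (h x) v

lemma mExp_mono (hf : ∀ i j, Integrable (fun x => f x i j) p)
    (hg : ∀ i j, Integrable (fun x => g x i j) p) (h : ∀ x, f x ≤ g x) :
    mExp p f ≤ mExp p g := by
  rw [← sub_nonneg, ← mExp_sub hf hg]
  exact mExp_nonneg (fun i j => (hg i j).sub (hf i j)) fun x => sub_nonneg.mpr (h x)

end Expectation

section LDPTerm

variable {d : ℕ}

noncomputable def ldpTerm (w : Fin d → ℝ) : Matrix (Fin d) (Fin d) ℝ :=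
  (enorm' w)⁻¹ • vecMulVec w w

lemma ldpTerm_zero : ldpTerm (0 : Fin d → ℝ) = 0 := by
  simp [ldpTerm]

-- The indicator `1{x ≠ 0}` is dropped: `ldpTerm 0 = 0` (with `0⁻¹ = 0`).
lemma FLDP_eq (p : Measure (Fin d → ℝ)) (lam : ℝ) (U : Matrix (Fin d) (Fin d) ℝ) :
    FLDP p lam U = mExp p (fun x => ldpTerm (U *ᵥ x)) + lam • U := by
  refine congrArg (mExp p · + lam • U) (funext fun x => ?_)
  split_ifs with hx
  · rw [hx, mulVec_zero, ldpTerm_zero]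
  · rfl

lemma ldpTerm_nonneg (w : Fin d → ℝ) : 0 ≤ ldpTerm w :=
  smul_nonneg (inv_nonneg.mpr (enorm'_nonneg w))
    (nonneg_iff_posSemidef.mpr (by simpa using posSemidef_vecMulVec_self_star w))

lemma conj_ldpTerm_nonneg (T : Matrix (Fin d) (Fin d) ℝ) (w : Fin d → ℝ) :
    0 ≤ T * ldpTerm w * Tᵀ := by
  simpa only [star_eq_conjTranspose, conjTranspose_eq_transpose_of_trivial] using
    star_right_conjugate_nonneg (ldpTerm_nonneg w) T

lemma ldpTerm_mulVec (B : Matrix (Fin d) (Fin d) ℝ) (w : Fin d → ℝ) :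
    ldpTerm (B *ᵥ w) = (enorm' w / enorm' (B *ᵥ w)) • (B * ldpTerm w * Bᵀ) := by
  rcases eq_or_ne w 0 with rfl | hw
  · simp [ldpTerm_zero]
  rw [ldpTerm, ldpTerm, Matrix.mul_smul, Matrix.smul_mul, smul_smul, mul_vecMulVec,
    vecMulVec_mul, vecMul_transpose, div_mul_eq_mul_div,
    mul_inv_cancel₀ (enorm'_eq_zero.not.mpr hw), one_div]

lemma ldpTerm_mulVec_of_orthogonal {Q : Matrix (Fin d) (Fin d) ℝ} (hQ : Qᵀ * Q = 1)
    (w : Fin d → ℝ) : ldpTerm (Q *ᵥ w) = Q * ldpTerm w * Qᵀ := by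
  rcases eq_or_ne w 0 with rfl | hw
  · simp [ldpTerm_zero]
  rw [ldpTerm_mulVec, enorm'_mulVec_of_orthogonal hQ, div_self (enorm'_eq_zero.not.mpr hw),
    one_smul]

variable {S T : Matrix (Fin d) (Fin d) ℝ}

lemma sqrt_smul_conj_ldpTerm_le (hST : S * T = 1) {m : ℝ} (h : m • 1 ≤ Sᵀ * S)
    (w : Fin d → ℝ) : Real.sqrt m • (T * ldpTerm w * Tᵀ) ≤ ldpTerm (T *ᵥ w) := by
  have hw : S *ᵥ (T *ᵥ w) = w := by rw [mulVec_mulVec, hST, one_mulVec]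
  rcases eq_or_ne (T *ᵥ w) 0 with h0 | h0
  · obtain rfl : w = 0 := by rw [← hw, h0, mulVec_zero]
    simp [ldpTerm_zero]
  rw [ldpTerm_mulVec]
  refine smul_le_smul_of_nonneg_right ?_ (conj_ldpTerm_nonneg T w)
  rw [le_div_iff₀ ((enorm'_nonneg _).lt_of_ne' (enorm'_eq_zero.not.mpr h0))]
  simpa [hw] using sqrt_mul_enorm'_le h (T *ᵥ w)

lemma ldpTerm_le_sqrt_smul_conj (hST : S * T = 1) {M : ℝ} (h : Sᵀ * S ≤ M • 1)
    (w : Fin d → ℝ) : ldpTerm (T *ᵥ w) ≤ Real.sqrt M • (T * ldpTerm w * Tᵀ) := by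
  have hw : S *ᵥ (T *ᵥ w) = w := by rw [mulVec_mulVec, hST, one_mulVec]
  rw [ldpTerm_mulVec]
  refine smul_le_smul_of_nonneg_right ?_ (conj_ldpTerm_nonneg T w)
  refine div_le_of_le_mul₀ (enorm'_nonneg _) (Real.sqrt_nonneg M) ?_
  simpa [hw] using enorm'_mulVec_le_sqrt_mul h (T *ᵥ w)

lemma abs_ldpTerm_apply_le (w : Fin d → ℝ) (i j : Fin d) : |ldpTerm w i j| ≤ enorm' w := by
  rcases eq_or_ne w 0 with rfl | hw
  · simp [ldpTerm_zero, enorm'_nonneg]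
  have hpos : 0 < enorm' w := (enorm'_nonneg w).lt_of_ne' (enorm'_eq_zero.not.mpr hw)
  have hcoord (k : Fin d) : |w k| ≤ enorm' w := by
    simpa [enorm'_eq_norm] using PiLp.norm_apply_le (WithLp.toLp 2 w) k
  rw [ldpTerm, Matrix.smul_apply, vecMulVec_apply, smul_eq_mul, abs_mul, abs_inv, abs_of_pos hpos,
    abs_mul, inv_mul_le_iff₀ hpos]
  exact mul_le_mul (hcoord i) (hcoord j) (abs_nonneg _) hpos.le

lemma continuous_enorm' : Continuous (enorm' : (Fin d → ℝ) → ℝ) := by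
  unfold enorm'; fun_prop

lemma measurable_ldpTerm_apply (i j : Fin d) : Measurable fun w : Fin d → ℝ => ldpTerm w i j := by
  simp only [ldpTerm, Matrix.smul_apply, vecMulVec_apply, smul_eq_mul]
  exact continuous_enorm'.measurable.inv.mul (by fun_prop)

variable {p : Measure (Fin d → ℝ)} [IsFiniteMeasure p]

lemma integrable_ldpTerm_mulVec (hbdd : ∃ R : ℝ, ∀ᵐ x ∂p, enorm' x ≤ R)
    (U : Matrix (Fin d) (Fin d) ℝ) (i j : Fin d) :
    Integrable (fun x => ldpTerm (U *ᵥ x) i j) p := by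
  obtain ⟨R, hR⟩ := hbdd
  refine .mono' (integrable_const (opNorm U * R)) ?_ ?_
  · exact ((measurable_ldpTerm_apply i j).comp (by fun_prop)).aestronglyMeasurable
  filter_upwards [hR] with x hx
  calc |ldpTerm (U *ᵥ x) i j| ≤ enorm' (U *ᵥ x) := abs_ldpTerm_apply_le _ i j
    _ ≤ opNorm U * enorm' x := enorm'_mulVec_le U x
    _ ≤ opNorm U * R := mul_le_mul_of_nonneg_left hx (norm_nonneg _)

lemma smul_conj_mExp_ldpTerm (hbdd : ∃ R : ℝ, ∀ᵐ x ∂p, enorm' x ≤ R) (c : ℝ)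
    (T V : Matrix (Fin d) (Fin d) ℝ) :
    c • (T * mExp p (fun x => ldpTerm (V *ᵥ x)) * Tᵀ) =
      mExp p (fun x => c • (T * ldpTerm (V *ᵥ x) * Tᵀ)) := by
  rw [mExp_smul, mExp_mul_mul_transpose (integrable_ldpTerm_mulVec hbdd V)]

lemma sqrt_smul_conj_mExp_ldpTerm_le (hbdd : ∃ R : ℝ, ∀ᵐ x ∂p, enorm' x ≤ R)
    (hST : S * T = 1) {m : ℝ} (h : m • 1 ≤ Sᵀ * S) (V : Matrix (Fin d) (Fin d) ℝ) :
    Real.sqrt m • (T * mExp p (fun x => ldpTerm (V *ᵥ x)) * Tᵀ) ≤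
      mExp p (fun x => ldpTerm ((T * V) *ᵥ x)) := by
  rw [smul_conj_mExp_ldpTerm hbdd]
  refine mExp_mono (fun i j => ?_) (integrable_ldpTerm_mulVec hbdd _) fun x => ?_
  · exact (integrable_mul_mul_transpose_apply (integrable_ldpTerm_mulVec hbdd V) T i j).const_mul _
  · rw [← mulVec_mulVec]
    exact sqrt_smul_conj_ldpTerm_le hST h _

lemma mExp_ldpTerm_le_sqrt_smul_conj (hbdd : ∃ R : ℝ, ∀ᵐ x ∂p, enorm' x ≤ R)
    (hST : S * T = 1) {M : ℝ} (h : Sᵀ * S ≤ M • 1) (V : Matrix (Fin d) (Fin d) ℝ) :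
    mExp p (fun x => ldpTerm ((T * V) *ᵥ x)) ≤
      Real.sqrt M • (T * mExp p (fun x => ldpTerm (V *ᵥ x)) * Tᵀ) := by
  rw [smul_conj_mExp_ldpTerm hbdd]
  refine mExp_mono (integrable_ldpTerm_mulVec hbdd _) (fun i j => ?_) fun x => ?_
  · exact (integrable_mul_mul_transpose_apply (integrable_ldpTerm_mulVec hbdd V) T i j).const_mul _
  · rw [← mulVec_mulVec]
    exact ldpTerm_le_sqrt_smul_conj hST h _

end LDPTerm

section Polar

variable {d : ℕ} {A : Matrix (Fin d) (Fin d) ℝ}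

lemma psqrt_eq_sqrt (hA : A.PosSemidef) : psqrt A = CFC.sqrt A := by
  rw [psqrt, dif_pos hA, CFC.sqrt_eq_cfc, cfc_nnreal_eq_real _ A, hA.1.cfc_eq]
  simp only [IsHermitian.cfc, Real.coe_sqrt, Real.coe_toNNReal', Unitary.conjStarAlgAut_apply]
  congr 3
  funext i
  simp [max_eq_left (hA.eigenvalues_nonneg i)]

lemma symMat_eq_sqrt (A : Matrix (Fin d) (Fin d) ℝ) : symMat A = CFC.sqrt (Aᵀ * A) :=
  psqrt_eq_sqrt (by simpa using posSemidef_conjTranspose_mul_self A)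

lemma symMat_nonneg (A : Matrix (Fin d) (Fin d) ℝ) : 0 ≤ symMat A := by
  rw [symMat_eq_sqrt]
  exact CFC.sqrt_nonneg _

lemma symMat_mul_self (A : Matrix (Fin d) (Fin d) ℝ) : symMat A * symMat A = Aᵀ * A := by
  rw [symMat_eq_sqrt]
  exact CFC.sqrt_mul_sqrt_self _ (by simpa using (posSemidef_conjTranspose_mul_self A).nonneg)

lemma posDef_symMat (hA : IsUnit A) : (symMat A).PosDef := by
  have hAA : (Aᵀ * A).PosDef := by
    simpa using PosDef.conjTranspose_mul_self A (mulVec_injective_iff_isUnit.mpr hA)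
  rw [symMat_eq_sqrt]
  exact hAA.sqrt

lemma exists_orthogonal_mul_symMat (hA : IsUnit A) : ∃ Q, Qᵀ * Q = 1 ∧ Q * symMat A = A := by
  set U := symMat A
  have hUdet : IsUnit U.det := (isUnit_iff_isUnit_det U).mp (posDef_symMat hA).isUnit
  refine ⟨A * U⁻¹, ?_, nonsing_inv_mul_cancel_right U A hUdet⟩
  rw [transpose_mul, transpose_nonsing_inv, transpose_eq_self_of_nonneg (symMat_nonneg A),
    Matrix.mul_assoc, ← Matrix.mul_assoc Aᵀ, ← symMat_mul_self, ← Matrix.mul_assoc,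
    ← Matrix.mul_assoc, nonsing_inv_mul _ hUdet, Matrix.one_mul, mul_nonsing_inv _ hUdet]

lemma sqrt_mul_transpose_eq {Q : Matrix (Fin d) (Fin d) ℝ} (hQ : Qᵀ * Q = 1)
    (hA : Q * symMat A = A) : CFC.sqrt (A * Aᵀ) = Q * symMat A * Qᵀ := by
  refine sqrt_eq_of_mul_self ?_ ?_
  · simpa only [star_eq_conjTranspose, conjTranspose_eq_transpose_of_trivial] using
      star_right_conjugate_nonneg (symMat_nonneg A) Q
  · calc Q * symMat A * Qᵀ * (Q * symMat A * Qᵀ)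
        = Q * symMat A * (Qᵀ * Q) * symMat A * Qᵀ := by simp only [Matrix.mul_assoc]
      _ = (Q * symMat A) * (Q * symMat A)ᵀ := by
          rw [hQ, Matrix.mul_one, transpose_mul, transpose_eq_self_of_nonneg (symMat_nonneg A),
            Matrix.mul_assoc, Matrix.mul_assoc]
      _ = A * Aᵀ := by rw [hA]

end Polar

section Iteration

variable {d : ℕ} {p : Measure (Fin d → ℝ)} [IsFiniteMeasure p] {lam : ℝ}

lemma FLDP_posDef (hbdd : ∃ R : ℝ, ∀ᵐ x ∂p, enorm' x ≤ R) (hlam : 0 < lam)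
    {V : Matrix (Fin d) (Fin d) ℝ} (hV : V.PosDef) : (FLDP p lam V).PosDef := by
  rw [FLDP_eq]
  refine PosDef.posSemidef_add ?_ (hV.smul hlam)
  exact nonneg_iff_posSemidef.mp
    (mExp_nonneg (integrable_ldpTerm_mulVec hbdd V) fun x => ldpTerm_nonneg _)

-- `FLDP` at a possibly non-symmetric `A`, with `(A Aᵀ)^{1/2}` in the linear term: by the polar
-- decomposition it is orthogonally similar to `FLDP p lam (symMat A)`.
noncomputable def FLDPLeft (p : Measure (Fin d → ℝ)) (lam : ℝ) (A : Matrix (Fin d) (Fin d) ℝ) :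
    Matrix (Fin d) (Fin d) ℝ :=
  mExp p (fun x => ldpTerm (A *ᵥ x)) + lam • CFC.sqrt (A * Aᵀ)

lemma exists_orthogonal_FLDP_symMat_eq (hbdd : ∃ R : ℝ, ∀ᵐ x ∂p, enorm' x ≤ R) {A : Matrix (Fin d) (Fin d) ℝ}
    (hA : IsUnit A) : ∃ Q, Qᵀ * Q = 1 ∧ FLDP p lam (symMat A) = Qᵀ * FLDPLeft p lam A * Q := by
  obtain ⟨Q, hQ, hQA⟩ := exists_orthogonal_mul_symMat hA
  have hQt : Qᵀᵀ * Qᵀ = 1 := by rw [transpose_transpose]; exact mul_eq_one_comm.mp hQ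
  have hQtA : Qᵀ * A = symMat A := by
    nth_rw 1 [← hQA]
    rw [← Matrix.mul_assoc, hQ, Matrix.one_mul]
  have hUx (x : Fin d → ℝ) : symMat A *ᵥ x = Qᵀ *ᵥ (A *ᵥ x) := by rw [mulVec_mulVec, hQtA]
  have hE : mExp p (fun x => ldpTerm (symMat A *ᵥ x)) =
      Qᵀ * mExp p (fun x => ldpTerm (A *ᵥ x)) * Q := by
    simp_rw [hUx, ldpTerm_mulVec_of_orthogonal hQt]
    simpa using mExp_mul_mul_transpose (integrable_ldpTerm_mulVec hbdd A) Qᵀ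
  refine ⟨Q, hQ, ?_⟩
  rw [FLDP_eq, hE, FLDPLeft, sqrt_mul_transpose_eq hQ hQA, Matrix.mul_add, Matrix.add_mul,
    Matrix.mul_smul, Matrix.smul_mul]
  simp only [← Matrix.mul_assoc, hQ, Matrix.one_mul]
  rw [Matrix.mul_assoc _ Qᵀ, hQ, Matrix.mul_one]

lemma mul_transpose_eq_conj {T V F : Matrix (Fin d) (Fin d) ℝ} (hT : Tᵀ = T) (hV : Vᵀ = V)
    (hTFT : T * F * T = 1) : (T * V) * (T * V)ᵀ = (T * V * T) * F * (T * V * T) := by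
  calc (T * V) * (T * V)ᵀ = T * V * (T * F * T) * V * T := by
        rw [hTFT, transpose_mul, hT, hV]; simp only [Matrix.mul_one, Matrix.mul_assoc]
    _ = (T * V * T) * F * (T * V * T) := by simp only [Matrix.mul_assoc]

theorem FLDPLeft_bounds (hbdd : ∃ R : ℝ, ∀ᵐ x ∂p, enorm' x ≤ R) (hlam : 0 < lam)
    {V : Matrix (Fin d) (Fin d) ℝ} (hV : V.PosDef) {m M : ℝ} (hm : 0 ≤ m) (hM : 0 ≤ M)
    (hmF : m • 1 ≤ FLDP p lam V) (hMF : FLDP p lam V ≤ M • 1) :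
    Real.sqrt m • 1 ≤ FLDPLeft p lam ((CFC.sqrt (FLDP p lam V))⁻¹ * V) ∧
      FLDPLeft p lam ((CFC.sqrt (FLDP p lam V))⁻¹ * V) ≤ Real.sqrt M • 1 := by
  set F := FLDP p lam V
  set S := CFC.sqrt F
  set T := S⁻¹
  have hF : F.PosDef := FLDP_posDef hbdd hlam hV
  have hST : S * T = 1 := mul_nonsing_inv S ((isUnit_iff_isUnit_det S).mp hF.sqrt.isUnit)
  have hSS : Sᵀ * S = F := by
    rw [transpose_eq_self_of_nonneg (CFC.sqrt_nonneg F)]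
    exact CFC.sqrt_mul_sqrt_self F hF.posSemidef.nonneg
  have hTt : Tᵀ = T := by
    rw [transpose_nonsing_inv, transpose_eq_self_of_nonneg (CFC.sqrt_nonneg F)]
  have hTFT : T * F * T = 1 := hF.inv_sqrt_mul_mul_inv_sqrt
  set E := mExp p (fun x => ldpTerm (V *ᵥ x))
  set P := T * V * T
  have hP : 0 ≤ P := by
    simpa [star_eq_conjTranspose, hTt] using star_left_conjugate_nonneg hV.posSemidef.nonneg T
  have hone : T * E * Tᵀ + lam • P = 1 := by
    rw [hTt, ← hTFT, show F = E + lam • V from FLDP_eq p lam V, Matrix.mul_add, Matrix.add_mul,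
      Matrix.mul_smul, Matrix.smul_mul]
  have hAA : (T * V) * (T * V)ᵀ = P * F * P :=
    mul_transpose_eq_conj hTt (transpose_eq_self_of_nonneg hV.posSemidef.nonneg) hTFT
  constructor
  · calc Real.sqrt m • 1 = Real.sqrt m • (T * E * Tᵀ) + lam • (Real.sqrt m • P) := by
          rw [← hone, smul_add, smul_comm]
      _ ≤ FLDPLeft p lam (T * V) :=
          add_le_add (sqrt_smul_conj_mExp_ldpTerm_le hbdd hST (hSS ▸ hmF) V)
            (smul_le_smul_of_nonneg_left (hAA ▸ sqrt_smul_le_sqrt_conj hP hm hmF) hlam.le)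
  · calc FLDPLeft p lam (T * V) ≤ Real.sqrt M • (T * E * Tᵀ) + lam • (Real.sqrt M • P) :=
          add_le_add (mExp_ldpTerm_le_sqrt_smul_conj hbdd hST (hSS ▸ hMF) V)
            (smul_le_smul_of_nonneg_left
              (hAA ▸ sqrt_conj_le_sqrt_smul hP hF.posSemidef.nonneg hM hMF) hlam.le)
      _ = Real.sqrt M • 1 := by rw [← hone, smul_add, smul_comm]

lemma isUnit_inv_psqrt_FLDP_mul (hbdd : ∃ R : ℝ, ∀ᵐ x ∂p, enorm' x ≤ R) (hlam : 0 < lam)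
    {V : Matrix (Fin d) (Fin d) ℝ} (hV : V.PosDef) : IsUnit ((psqrt (FLDP p lam V))⁻¹ * V) := by
  have hF := FLDP_posDef hbdd hlam hV
  rw [psqrt_eq_sqrt hF.posSemidef]
  exact (isUnit_nonsing_inv_iff.mpr hF.sqrt.isUnit).mul hV.isUnit

theorem FLDP_symMat_bounds (hbdd : ∃ R : ℝ, ∀ᵐ x ∂p, enorm' x ≤ R) (hlam : 0 < lam)
    {V : Matrix (Fin d) (Fin d) ℝ} (hV : V.PosDef) {m M : ℝ} (hm : 0 ≤ m) (hM : 0 ≤ M)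
    (hmF : m • 1 ≤ FLDP p lam V) (hMF : FLDP p lam V ≤ M • 1) :
    Real.sqrt m • 1 ≤ FLDP p lam (symMat ((psqrt (FLDP p lam V))⁻¹ * V)) ∧
      FLDP p lam (symMat ((psqrt (FLDP p lam V))⁻¹ * V)) ≤ Real.sqrt M • 1 := by
  obtain ⟨Q, hQ, hFQ⟩ :=
    exists_orthogonal_FLDP_symMat_eq (lam := lam) hbdd (isUnit_inv_psqrt_FLDP_mul hbdd hlam hV)
  rw [hFQ, psqrt_eq_sqrt (FLDP_posDef hbdd hlam hV).posSemidef]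
  obtain ⟨hlo, hup⟩ := FLDPLeft_bounds hbdd hlam hV hm hM hmF hMF
  constructor
  · simpa [star_eq_conjTranspose, hQ] using star_left_conjugate_le_conjugate hlo Q
  · simpa [star_eq_conjTranspose, hQ] using star_left_conjugate_le_conjugate hup Q

end Iteration

/-- Eigenvalue contraction for the exact spectral iteration of `FLDP`. -/
theorem stmt6 {d : ℕ} (hd : 0 < d) (p : Measure (Fin d → ℝ)) [IsProbabilityMeasure p]
    (hbdd : ∃ R : ℝ, ∀ᵐ x ∂p, enorm' x ≤ R) (lam : ℝ) (hlam : 0 < lam)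
    (U F : ℕ → Matrix (Fin d) (Fin d) ℝ)
    (hU0 : U 0 = 1)
    (hF : ∀ k, F k = FLDP p lam (U k))
    (hUrec : ∀ k, U (k+1) = symMat ((psqrt (F k))⁻¹ * U k)) :
    ∀ k, Real.sqrt (lmin (F k)) ≤ lmin (F (k+1))
      ∧ lmin (F (k+1)) ≤ lmax (F (k+1))
      ∧ lmax (F (k+1)) ≤ Real.sqrt (lmax (F k)) := by
  have hU (k : ℕ) : (U k).PosDef := by
    induction k with
    | zero => rw [hU0]; exact PosDef.one
    | succ k ih =>
      rw [hUrec, hF]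
      exact posDef_symMat (isUnit_inv_psqrt_FLDP_mul hbdd hlam ih)
  have hherm (k : ℕ) : (F k).IsHermitian := (hF k ▸ FLDP_posDef hbdd hlam (hU k)).isHermitian
  intro k
  have hm : 0 ≤ lmin (F k) := by
    rw [le_lmin_iff hd (hherm k), zero_smul, hF k]
    exact (FLDP_posDef hbdd hlam (hU k)).posSemidef.nonneg
  have hbounds := FLDP_symMat_bounds hbdd hlam (hU k) hm (hm.trans (lmin_le_lmax hd (hherm k)))
    (hF k ▸ (le_lmin_iff hd (hherm k)).mp le_rfl) (hF k ▸ (lmax_le_iff hd (hherm k)).mp le_rfl)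
  rw [← hF k, ← hUrec k, ← hF (k + 1)] at hbounds
  exact ⟨(le_lmin_iff hd (hherm _)).mpr hbounds.1, lmin_le_lmax hd (hherm _),
    (lmax_le_iff hd (hherm _)).mpr hbounds.2⟩
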